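/- arXiv:1008.4033 — 3 statements merged into one kernel-verified Lean document; each statement's English description precedes it below -/
import Mathlib

section
/- If a word α is a concatenation of blocks each of which is either [0] or [m,m] with m ≠ 0, then the number k of nonzero letters of α is even, and EJ α t = (1/2)^(k/2) · t^q / q! where q = k/2 + z and z is the number of zeros in α. -/
/-! Since `EJ` recurses on the last letter, work with the reversed word, which is admissible
again because every block is a palindrome. Peeling a block off its front integrates once,
with an extra factor `1/2` for a pair `m m`; as `∫₀ᵗ sⁿ/n! = tⁿ⁺¹/(n+1)!`, induction over the
blocks gives `(1/2)^p t^q / q!` with `p` pair blocks and `q` blocks in all. -/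

open intervalIntegral

noncomputable def EJrev : List ℕ → ℝ → ℝ
  | [], _ => 1
  | [a], t => if a = 0 then ∫ s in (0:ℝ)..t, EJrev [] s else 0
  | a :: b :: rest, t =>
      if a = 0 then ∫ s in (0:ℝ)..t, EJrev (b :: rest) s
      else if b = a then (1/2) * ∫ s in (0:ℝ)..t, EJrev rest s
      else 0

/-- Expectation of the Stratonovich iterated integral `J_α(t)`, defined by the
recursion on the last letter of the word. -/
noncomputable def EJ (α : List ℕ) (t : ℝ) : ℝ := EJrev α.reverse t

/-- A block is `[0]` or `[m,m]` with `m ≠ 0`. -/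
def IsBlock (b : List ℕ) : Prop := b = [0] ∨ ∃ m : ℕ, m ≠ 0 ∧ b = [m, m]

/-- A word is admissible if it is a concatenation of blocks. -/
def Admissible (α : List ℕ) : Prop :=
  ∃ L : List (List ℕ), (∀ b ∈ L, IsBlock b) ∧ L.flatten = α

theorem integral_const_mul_pow_div_factorial (c t : ℝ) (n : ℕ) :
    ∫ s in (0:ℝ)..t, c * s ^ n / n.factorial = c * t ^ (n + 1) / (n + 1).factorial := by
  simp_rw [mul_div_assoc, div_eq_mul_inv _ (n.factorial : ℝ), intervalIntegral.integral_const_mul,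
    intervalIntegral.integral_mul_const, integral_pow]
  push_cast [Nat.factorial_succ]
  field_simp
  ring

theorem EJrev_zero_cons (β : List ℕ) (t : ℝ) :
    EJrev (0 :: β) t = ∫ s in (0:ℝ)..t, EJrev β s := by
  cases β <;> simp [EJrev]

theorem EJrev_pair_cons {m : ℕ} (hm : m ≠ 0) (β : List ℕ) (t : ℝ) :
    EJrev (m :: m :: β) t = (1/2) * ∫ s in (0:ℝ)..t, EJrev β s := by
  simp [EJrev, hm]

namespace Admissible

theorem nil : Admissible [] := ⟨[], by simp, rfl⟩

theorem zero_cons {β : List ℕ} (h : Admissible β) : Admissible (0 :: β) := by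
  obtain ⟨L, hL, rfl⟩ := h
  exact ⟨[0] :: L, List.forall_mem_cons.2 ⟨Or.inl rfl, hL⟩, rfl⟩

theorem pair_cons {m : ℕ} (hm : m ≠ 0) {β : List ℕ} (h : Admissible β) :
    Admissible (m :: m :: β) := by
  obtain ⟨L, hL, rfl⟩ := h
  exact ⟨[m, m] :: L, List.forall_mem_cons.2 ⟨Or.inr ⟨m, hm, rfl⟩, hL⟩, rfl⟩

@[elab_as_elim]
theorem induction {P : (α : List ℕ) → Admissible α → Prop} (nil : P [] nil)
    (zero_cons : ∀ β (h : Admissible β), P β h → P (0 :: β) h.zero_cons)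
    (pair_cons : ∀ m (hm : m ≠ 0) β (h : Admissible β), P β h → P (m :: m :: β) (h.pair_cons hm))
    {α : List ℕ} (h : Admissible α) : P α h := by
  obtain ⟨L, hL, rfl⟩ := h
  induction L with
  | nil => exact nil
  | cons b L ih =>
    have hL' : ∀ b ∈ L, IsBlock b := fun b hb => hL b (List.mem_cons_of_mem _ hb)
    rcases hL b List.mem_cons_self with rfl | ⟨m, hm, rfl⟩
    · exact zero_cons _ ⟨L, hL', rfl⟩ (ih hL')
    · exact pair_cons m hm _ ⟨L, hL', rfl⟩ (ih hL')

theorem reverse {α : List ℕ} (h : Admissible α) : Admissible α.reverse := by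
  obtain ⟨L, hL, rfl⟩ := h
  have hrev : ∀ b ∈ L, b.reverse = b := fun b hb => by
    rcases hL b hb with rfl | ⟨m, -, rfl⟩ <;> rfl
  refine ⟨L.reverse, fun b hb => hL b (List.mem_reverse.1 hb), ?_⟩
  rw [List.reverse_flatten, List.map_congr_left hrev, List.map_id']

theorem even_length_filter_ne_zero {α : List ℕ} (h : Admissible α) :
    Even (α.filter (· ≠ 0)).length := by
  induction h using Admissible.induction with
  | nil => simp
  | zero_cons β _ ih => simpa using ih
  | pair_cons m hm β _ ih => simpa [hm, parity_simps] using ih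

theorem EJrev_eq {β : List ℕ} (h : Admissible β) (t : ℝ) :
    EJrev β t = (1/2 : ℝ) ^ ((β.filter (· ≠ 0)).length / 2) *
      t ^ ((β.filter (· ≠ 0)).length / 2 + β.count 0) /
      (Nat.factorial ((β.filter (· ≠ 0)).length / 2 + β.count 0)) := by
  induction h using Admissible.induction generalizing t with
  | nil => simp [EJrev]
  | zero_cons β _ ih =>
    rw [EJrev_zero_cons, integral_congr (fun s _ => ih s), integral_const_mul_pow_div_factorial,
      List.filter_cons_of_neg (by simp), List.count_cons_self, ← add_assoc]
  | pair_cons m hm β _ ih =>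
    rw [EJrev_pair_cons hm, integral_congr (fun s _ => ih s),
      integral_const_mul_pow_div_factorial]
    have hk : ∀ k : ℕ, (k + 1 + 1) / 2 = k / 2 + 1 := by omega
    rw [List.filter_cons_of_pos (by simpa), List.filter_cons_of_pos (by simpa),
      List.length_cons, List.length_cons, hk, List.count_cons_of_ne hm, List.count_cons_of_ne hm,
      add_right_comm, pow_succ]
    ring

end Admissible

theorem stmt2 (α : List ℕ) (h : Admissible α) :
    Even (α.filter (· ≠ 0)).length ∧
    ∀ t : ℝ,
      EJ α t = (1/2 : ℝ) ^ ((α.filter (· ≠ 0)).length / 2) *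
        t ^ ((α.filter (· ≠ 0)).length / 2 + α.count 0) /
        (Nat.factorial ((α.filter (· ≠ 0)).length / 2 + α.count 0)) := by
  refine ⟨h.even_length_filter_ne_zero, fun t => ?_⟩
  rw [EJ, h.reverse.EJrev_eq, List.filter_reverse, List.length_reverse, List.count_reverse]
end

section
/- For a word consisting of n repetitions of the pair [m,m] with m ≠ 0 (i.e., List.replicate (2n) m), EJ (List.replicate (2n) m) t = (1/2)^n · t^n / n! for all real t. -/
open intervalIntegral

theorem EJrev_cons_cons_self {m : ℕ} (hm : m ≠ 0) (w : List ℕ) (t : ℝ) :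
    EJrev (m :: m :: w) t = 1 / 2 * ∫ s in (0:ℝ)..t, EJrev w s := by
  rw [EJrev, if_neg hm, if_pos rfl]

theorem integral_pow_div_factorial (k : ℕ) (t : ℝ) :
    ∫ s in (0:ℝ)..t, s ^ k / k.factorial = t ^ (k + 1) / (k + 1).factorial := by
  rw [intervalIntegral.integral_div, integral_pow, Nat.factorial_succ]
  push_cast
  field_simp
  ring

theorem EJrev_replicate_two_mul {m : ℕ} (hm : m ≠ 0) (n : ℕ) (t : ℝ) :
    EJrev (List.replicate (2 * n) m) t = (1/2 : ℝ) ^ n * (t ^ n / n.factorial) := by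
  induction n generalizing t with
  | zero => simp [EJrev]
  | succ k ih =>
    rw [show 2 * (k + 1) = 2 * k + 1 + 1 by ring, List.replicate_succ, List.replicate_succ,
      EJrev_cons_cons_self hm]
    simp_rw [ih, intervalIntegral.integral_const_mul, integral_pow_div_factorial]
    ring

theorem stmt13 (n : ℕ) (m : ℕ) (hm : m ≠ 0) (t : ℝ) :
    EJ (List.replicate (2 * n) m) t = (1/2 : ℝ) ^ n * t ^ n / (Nat.factorial n) := by
  rw [EJ, List.reverse_replicate, EJrev_replicate_two_mul hm, mul_div_assoc]
end

section
/- Concatenation multiplicativity of the leading coefficient: if α and β are both concatenations of blocks [0] and [m,m] (m ≠ 0), with p_α = (1/2)^{k_α/2}, q_α as in the closed form, and similarly for β, then α ++ β is also such a concatenation and p_{α++β} = p_α · p_β and q_{α++β} = q_α + q_β, so EJ (α ++ β) t = p_α p_β t^{q_α+q_β}/(q_α+q_β)!. -/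
open intervalIntegral

lemma EJrev_zero (l : List ℕ) (t : ℝ) :
    EJrev (0 :: l) t = ∫ s in (0:ℝ)..t, EJrev l s := by
  cases l <;> simp [EJrev]

lemma EJrev_mm (m : ℕ) (hm : m ≠ 0) (l : List ℕ) (t : ℝ) :
    EJrev (m :: m :: l) t = (1/2) * ∫ s in (0:ℝ)..t, EJrev l s := by
  simp [EJrev, hm]

lemma integral_step (p : ℝ) (q : ℕ) (t : ℝ) :
    (∫ s in (0:ℝ)..t, p * s ^ q / (Nat.factorial q : ℝ)) =
      p * t ^ (q + 1) / (Nat.factorial (q + 1) : ℝ) := by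
  have h : ∀ s : ℝ, p * s ^ q / (Nat.factorial q : ℝ) =
      (p / (Nat.factorial q : ℝ)) * s ^ q := by intro s; ring
  simp_rw [h]
  rw [intervalIntegral.integral_const_mul, integral_pow]
  have hq : (Nat.factorial q : ℝ) ≠ 0 := by
    exact_mod_cast (Nat.factorial_ne_zero q)
  have hq1 : ((q : ℝ) + 1) ≠ 0 := by positivity
  rw [Nat.factorial_succ]
  push_cast
  rw [zero_pow (Nat.succ_ne_zero q), sub_zero]
  rw [div_mul_div_comm, mul_comm (Nat.factorial q : ℝ)]

lemma main_lemma (L : List (List ℕ)) (hL : ∀ b ∈ L, IsBlock b) :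
    Even ((L.flatten.filter (· ≠ 0)).length) ∧
    ∀ t : ℝ, EJ L.flatten t =
      (1/2:ℝ) ^ ((L.flatten.filter (· ≠ 0)).length / 2) *
        t ^ ((L.flatten.filter (· ≠ 0)).length / 2 + L.flatten.count 0) /
        Nat.factorial ((L.flatten.filter (· ≠ 0)).length / 2 + L.flatten.count 0) := by
  induction L using List.reverseRecOn with
  | nil => constructor
           · simp
           · intro t; simp [EJ, EJrev]
  | append_singleton L b ih =>
      have hL' : ∀ b ∈ L, IsBlock b := fun x hx => hL x (by simp [hx])
      have hb : IsBlock b := hL b (by simp)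
      obtain ⟨hev, hEJ⟩ := ih hL'
      set F := L.flatten with hF
      have hflat : (L ++ [b]).flatten = F ++ b := by simp [hF]
      rcases hb with hb | ⟨m, hm, hb⟩
      · subst hb
        have hc : ((F ++ [0]).filter (· ≠ 0)).length = (F.filter (· ≠ 0)).length := by
          simp
        have hz : (F ++ [0]).count 0 = F.count 0 + 1 := by simp
        rw [hflat]
        refine ⟨by rw [hc]; exact hev, fun t => ?_⟩
        have : EJ (F ++ [0]) t = ∫ s in (0:ℝ)..t, EJ F s := by
          simp only [EJ, List.reverse_append, List.reverse_singleton, List.singleton_append]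
          exact EJrev_zero _ t
        rw [this]
        have heq : ∀ s : ℝ, EJ F s =
            (1/2:ℝ) ^ ((F.filter (· ≠ 0)).length / 2) *
              s ^ ((F.filter (· ≠ 0)).length / 2 + F.count 0) /
              Nat.factorial ((F.filter (· ≠ 0)).length / 2 + F.count 0) := hEJ
        rw [intervalIntegral.integral_congr (fun s _ => heq s)]
        rw [integral_step]
        rw [hc, hz, add_assoc]
      · subst hb
        have hc : ((F ++ [m, m]).filter (· ≠ 0)).length = (F.filter (· ≠ 0)).length + 2 := by
          simp [hm]
        have hz : (F ++ [m, m]).count 0 = F.count 0 := by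
          simp [List.count_cons, hm, Ne.symm hm]
        rw [hflat]
        have hdiv : ((F.filter (· ≠ 0)).length + 2) / 2 = (F.filter (· ≠ 0)).length / 2 + 1 := by
          omega
        refine ⟨by rw [hc]; exact hev.add (by decide), fun t => ?_⟩
        have : EJ (F ++ [m, m]) t = (1/2) * ∫ s in (0:ℝ)..t, EJ F s := by
          simp only [EJ, List.reverse_append]
          exact EJrev_mm m hm _ t
        rw [this]
        rw [intervalIntegral.integral_congr (fun s _ => hEJ s)]
        rw [integral_step, hc, hz, hdiv]
        rw [pow_succ]
        ring_nf

theorem stmt18 (α β : List ℕ) (hα : Admissible α) (hβ : Admissible β)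
    (kα kβ qα qβ : ℕ)
    (hkα : kα = (α.filter (· ≠ 0)).length) (hkβ : kβ = (β.filter (· ≠ 0)).length)
    (hqα : qα = kα / 2 + α.count 0) (hqβ : qβ = kβ / 2 + β.count 0) :
    Admissible (α ++ β) ∧
    ((α ++ β).filter (· ≠ 0)).length / 2 + (α ++ β).count 0 = qα + qβ ∧
    ∀ t : ℝ, EJ (α ++ β) t =
      ((1/2 : ℝ) ^ (kα / 2) * (1/2 : ℝ) ^ (kβ / 2)) * t ^ (qα + qβ) /
        (Nat.factorial (qα + qβ)) := by
  obtain ⟨Lα, hLα, hfα⟩ := hα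
  obtain ⟨Lβ, hLβ, hfβ⟩ := hβ
  have hLab : ∀ b ∈ Lα ++ Lβ, IsBlock b := by
    intro b hb
    rcases List.mem_append.mp hb with h | h
    exacts [hLα b h, hLβ b h]
  have hflat : (Lα ++ Lβ).flatten = α ++ β := by simp [hfα, hfβ]
  obtain ⟨hevα, _⟩ := main_lemma Lα hLα
  obtain ⟨hevβ, _⟩ := main_lemma Lβ hLβ
  obtain ⟨hev, hEJ⟩ := main_lemma (Lα ++ Lβ) hLab
  rw [hfα] at hevα
  rw [hfβ] at hevβ
  rw [hflat] at hev hEJ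
  have hcadd : ((α ++ β).filter (· ≠ 0)).length
      = (α.filter (· ≠ 0)).length + (β.filter (· ≠ 0)).length := by
    simp
  obtain ⟨x, hx⟩ := hevα
  obtain ⟨y, hy⟩ := hevβ
  have hdiv : ((α ++ β).filter (· ≠ 0)).length / 2
      = (α.filter (· ≠ 0)).length / 2 + (β.filter (· ≠ 0)).length / 2 := by
    omega
  have hq : ((α ++ β).filter (· ≠ 0)).length / 2 + (α ++ β).count 0 = qα + qβ := by
    rw [hdiv, List.count_append, hqα, hqβ, hkα, hkβ]; ring
  refine ⟨⟨Lα ++ Lβ, hLab, hflat⟩, hq, fun t => ?_⟩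
  rw [hEJ t, hq, hdiv, pow_add, hkα, hkβ]
end
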